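/- Let α, γ > 0, β ∈ ℝ, Q = β/√(αγ), and A(z) = α z₁⁴ + 2β z₁² z₂² + γ z₂⁴. Then for all ξ, η ∈ ℝ²: Re A(ξ+iη) + 8A(η) = (Q/3)[√α(ξ₁² - 3η₁²) + √γ(ξ₂² - 3η₂²)]² + (4Q/3)√(αγ)(ξ₁ξ₂ - 3η₁η₂)² + ((3-Q)/3)[α(ξ₁² - 3η₁²)² + γ(ξ₂² - 3η₂²)²]. -/
import Mathlib


open Complex

/-- identity (relation2). -/
theorem stmt4 (α β γ : ℝ) (hα : 0 < α) (hγ : 0 < γ)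
    (Q : ℝ) (hQdef : Q = β / Real.sqrt (α * γ))
    (ξ1 ξ2 η1 η2 : ℝ) :
    ((α : ℂ) * (ξ1 + η1 * I) ^ 4 + 2 * β * (ξ1 + η1 * I) ^ 2 * (ξ2 + η2 * I) ^ 2
        + γ * (ξ2 + η2 * I) ^ 4).re
      + 8 * (α * η1 ^ 4 + 2 * β * η1 ^ 2 * η2 ^ 2 + γ * η2 ^ 4)
    = Q / 3 * (Real.sqrt α * (ξ1 ^ 2 - 3 * η1 ^ 2)
          + Real.sqrt γ * (ξ2 ^ 2 - 3 * η2 ^ 2)) ^ 2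
      + 4 * Q / 3 * Real.sqrt (α * γ) * (ξ1 * ξ2 - 3 * η1 * η2) ^ 2
      + (3 - Q) / 3 * (α * (ξ1 ^ 2 - 3 * η1 ^ 2) ^ 2
          + γ * (ξ2 ^ 2 - 3 * η2 ^ 2) ^ 2) := by
  have ha : Real.sqrt α ^ 2 = α := Real.sq_sqrt hα.le
  have hc : Real.sqrt γ ^ 2 = γ := Real.sq_sqrt hγ.le
  have hac : Real.sqrt (α * γ) = Real.sqrt α * Real.sqrt γ := Real.sqrt_mul hα.le γ
  have hpos : 0 < Real.sqrt α * Real.sqrt γ := by positivity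
  have hβ : β = Q * (Real.sqrt α * Real.sqrt γ) := by
    rw [hQdef, hac]; field_simp
  subst hβ
  rw [hac]
  simp only [Complex.add_re, Complex.mul_re, Complex.mul_im, Complex.add_im,
    Complex.ofReal_re, Complex.ofReal_im, Complex.I_re, Complex.I_im, pow_succ, pow_zero,
    Complex.one_re, Complex.one_im, mul_one, one_mul, mul_zero, zero_mul,
    sub_zero, zero_sub, zero_add, add_zero, Complex.re_ofNat, Complex.im_ofNat]
  linear_combination (-(Q/3) * (ξ1^2-3*η1^2)^2) * ha + (-(Q/3) * (ξ2^2-3*η2^2)^2) * hc
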